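/- Let λ ≥ 1 and let (b_j) and (p_j) be infinite sequences in a real Banach space X with (b_j) λ-wide-(s) and ‖p_j‖ ≤ 1/(4λ) for all j. Then the sequence (b_j + p_j) has a subsequence which is (2λ² + 5)-wide-(s). -/

import Mathlib

open Finset Filter Metric NormedSpace

open Topology

noncomputable section

universe u

variable {X Y : Type*} [NormedAddCommGroup X] [NormedSpace ℝ X]
  [NormedAddCommGroup Y] [NormedSpace ℝ Y]

/-- `b` is a `lam`-basic sequence: for all scalars `c` and all `k ≤ n`,
`‖∑_{j<k} c_j b_j‖ ≤ lam * ‖∑_{j<n} c_j b_j‖`. -/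
def IsBasicWith (lam : ℝ) (b : ℕ → X) : Prop :=
  ∀ (c : ℕ → ℝ) (k n : ℕ), k ≤ n →
    ‖∑ j ∈ Finset.range k, c j • b j‖ ≤ lam * ‖∑ j ∈ Finset.range n, c j • b j‖

/-- `b` is a `lam`-wide-(s) sequence: it is `2lam`-basic, `‖b j‖ ≤ lam` for all `j`,
and `|∑_{k≤j<n} c_j| ≤ lam * ‖∑_{j<n} c_j b_j‖` for all scalars and `k ≤ n`. -/
def IsWideSWith (lam : ℝ) (b : ℕ → X) : Prop :=
  IsBasicWith (2 * lam) b ∧ (∀ j, ‖b j‖ ≤ lam) ∧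
    ∀ (c : ℕ → ℝ) (k n : ℕ), k ≤ n →
      |∑ j ∈ Finset.Ico k n, c j| ≤ lam * ‖∑ j ∈ Finset.range n, c j • b j‖

private lemma exists_tail_functionals (lam : ℝ) (hlam : 1 ≤ lam) (b : ℕ → X)
    (hσ : ∀ (c : ℕ → ℝ) (k n : ℕ), k ≤ n →
      |∑ j ∈ Finset.Ico k n, c j| ≤ lam * ‖∑ j ∈ Finset.range n, c j • b j‖) :
    ∃ G : ℕ → X →L[ℝ] ℝ, (∀ k, ‖G k‖ ≤ lam) ∧ ∀ k i, G k (b i) = if k ≤ i then (1:ℝ) else 0 := by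
  have hlam0 : (0:ℝ) < lam := by linarith
  have hext : ∀ (l : ℕ →₀ ℝ) (w : ℕ → ℝ) (n : ℕ), l.support ⊆ Finset.range n →
      (l.sum fun i a => a * w i) = ∑ j ∈ Finset.range n, l j * w j := by
    intro l w n hsupp
    rw [Finsupp.sum]
    exact Finset.sum_subset hsupp (by intro i _ hi; rw [Finsupp.notMem_support_iff.mp hi, zero_mul])
  have hextv : ∀ (l : ℕ →₀ ℝ) (n : ℕ), l.support ⊆ Finset.range n →
      Finsupp.linearCombination ℝ b l = ∑ j ∈ Finset.range n, l j • b j := by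
    intro l n hsupp
    rw [Finsupp.linearCombination_apply, Finsupp.sum]
    exact Finset.sum_subset hsupp (by intro i _ hi; rw [Finsupp.notMem_support_iff.mp hi, zero_smul])
  have hrangesum : ∀ (l : ℕ →₀ ℝ) (k n : ℕ), k ≤ n →
      ∑ j ∈ Finset.range n, l j * (if k ≤ j then (1:ℝ) else 0) = ∑ j ∈ Finset.Ico k n, l j := by
    intro l k n hkn
    rw [Finset.range_eq_Ico, ← Finset.sum_Ico_consecutive _ (Nat.zero_le k) hkn]
    have h1 : ∑ j ∈ Finset.Ico 0 k, l j * (if k ≤ j then (1:ℝ) else 0) = 0 :=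
      Finset.sum_eq_zero (fun i hi => by
        simp [Nat.not_le.mpr (Finset.mem_Ico.mp hi).2])
    rw [h1, zero_add]
    exact Finset.sum_congr rfl (fun i hi => by simp [(Finset.mem_Ico.mp hi).1])
  have hli : LinearIndependent ℝ b := by
    rw [linearIndependent_iff]
    intro l hl
    set n := (l.support.sup id) + 1 with hn
    have hsupp : l.support ⊆ Finset.range n := by
      intro i hi
      simp only [Finset.mem_range, hn, Nat.lt_succ_iff]
      exact Finset.le_sup (f := id) hi
    have hsum : ∑ j ∈ Finset.range n, l j • b j = 0 := by rw [← hextv l n hsupp, hl]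
    have hzero : ∀ k, k ≤ n → ∑ j ∈ Finset.Ico k n, l j = 0 := by
      intro k hk
      have h := hσ l k n hk
      rw [hsum, norm_zero, mul_zero] at h
      exact abs_eq_zero.mp (le_antisymm h (abs_nonneg _))
    ext i
    by_cases hi : i < n
    · have h1 := hzero i hi.le
      have h2 := hzero (i+1) hi
      rw [Finset.sum_eq_sum_Ico_succ_bot hi, h2, add_zero] at h1
      simpa using h1
    · by_contra h
      exact hi (Finset.mem_range.mp (hsupp (Finsupp.mem_support_iff.mpr h)))
  have key : ∀ k : ℕ, ∀ u : Submodule.span ℝ (Set.range b),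
      |Finsupp.linearCombination ℝ (fun i => if k ≤ i then (1:ℝ) else 0) (hli.repr u)| ≤ lam * ‖u‖ := by
    intro k u
    set l := hli.repr u with hldef
    set n := max ((l.support.sup id) + 1) k with hn
    have hkn : k ≤ n := le_max_right _ _
    have hsupp : l.support ⊆ Finset.range n := by
      intro i hi
      simp only [Finset.mem_range, hn, lt_max_iff]
      exact Or.inl (Nat.lt_succ_of_le (Finset.le_sup (f := id) hi))
    have h1 : Finsupp.linearCombination ℝ (fun i => if k ≤ i then (1:ℝ) else 0) l
        = ∑ j ∈ Finset.Ico k n, l j := by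
      rw [Finsupp.linearCombination_apply]
      rw [show (l.sum fun i a => a • (if k ≤ i then (1:ℝ) else 0))
          = l.sum fun i a => a * (if k ≤ i then (1:ℝ) else 0) from rfl]
      rw [hext l _ n hsupp, hrangesum l k n hkn]
    have h2 : (u : X) = ∑ j ∈ Finset.range n, l j • b j := by
      conv_lhs => rw [← hli.linearCombination_repr u]
      exact hextv l n hsupp
    rw [h1]
    calc |∑ j ∈ Finset.Ico k n, l j| ≤ lam * ‖∑ j ∈ Finset.range n, l j • b j‖ := hσ l k n hkn
    _ = lam * ‖u‖ := by rw [← h2, Submodule.coe_norm]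
  have hGk : ∀ k : ℕ, ∃ g : X →L[ℝ] ℝ, ‖g‖ ≤ lam ∧ ∀ i, g (b i) = if k ≤ i then (1:ℝ) else 0 := by
    intro k
    set g0 : Submodule.span ℝ (Set.range b) →ₗ[ℝ] ℝ :=
      (Finsupp.linearCombination ℝ (fun i => if k ≤ i then (1:ℝ) else 0)).comp hli.repr with hg0
    have hb0 : ∀ u, ‖g0 u‖ ≤ lam * ‖u‖ := by
      intro u; rw [Real.norm_eq_abs]; exact key k u
    set g1 := LinearMap.mkContinuous g0 lam hb0 with hg1def
    obtain ⟨g, hg1, hg2⟩ := exists_extension_norm_eq _ g1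
    refine ⟨g, ?_, ?_⟩
    · rw [hg2]; exact LinearMap.mkContinuous_norm_le _ hlam0.le _
    · intro i
      have hmem : b i ∈ Submodule.span ℝ (Set.range b) := Submodule.subset_span ⟨i, rfl⟩
      rw [hg1 ⟨b i, hmem⟩]
      show g0 ⟨b i, hmem⟩ = _
      rw [hg0]
      simp only [LinearMap.comp_apply]
      rw [hli.repr_eq_single i ⟨b i, hmem⟩ rfl]
      simp [Finsupp.linearCombination_single]
  choose G hG1 hG2 using hGk
  exact ⟨G, hG1, hG2⟩

private lemma exists_norming_net [CompleteSpace X] (V : Set X) (hV : V.Finite) (η : ℝ) (hη : 0 < η) :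
    ∃ F : Finset (X →L[ℝ] ℝ), (∀ f ∈ F, ‖f‖ ≤ 1) ∧
      ∀ u ∈ Submodule.span ℝ V, ∃ f ∈ F, (1 - η) * ‖u‖ ≤ f u := by
  classical
  set W := Submodule.span ℝ V with hW
  haveI : FiniteDimensional ℝ W := FiniteDimensional.span_of_finite ℝ hV
  haveI : ProperSpace W := FiniteDimensional.proper ℝ W
  have hcomp : IsCompact (sphere (0 : W) 1) := isCompact_sphere 0 1
  obtain ⟨t, hts, htf, htcov⟩ := totallyBounded_iff_subset.mp hcomp.totallyBounded
    {q : W × W | dist q.1 q.2 < η} (Metric.dist_mem_uniformity hη)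
  have hfun : ∀ y : W, y ∈ t → ∃ g : X →L[ℝ] ℝ, ‖g‖ = 1 ∧ g (y : X) = ‖(y : X)‖ := by
    intro y hy
    have hy1 : ‖y‖ = 1 := by simpa using hts hy
    have hne : (y : X) ≠ 0 := by
      intro h
      have : y = 0 := Subtype.ext h
      rw [this, norm_zero] at hy1; norm_num at hy1
    exact exists_dual_vector ℝ (y : X) (norm_ne_zero_iff.mpr hne)
  choose g hg1 hg2 using hfun
  set F : Finset (X →L[ℝ] ℝ) := insert 0 ((htf.toFinset).attach.image
    (fun y => g y.1 (htf.mem_toFinset.mp y.2))) with hF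
  refine ⟨F, ?_, ?_⟩
  · intro f hf
    rw [hF] at hf
    rcases Finset.mem_insert.mp hf with h | h
    · simp [h]
    · obtain ⟨y, _, rfl⟩ := Finset.mem_image.mp h
      exact le_of_eq (hg1 _ _)
  · intro u hu
    by_cases hu0 : u = 0
    · refine ⟨0, Finset.mem_insert_self _ _, by simp [hu0]⟩
    · set u1 : W := ⟨u, hu⟩ with hu1def
      have hnu : (0:ℝ) < ‖u‖ := norm_pos_iff.mpr hu0
      set v : W := (‖u‖⁻¹ : ℝ) • u1 with hv
      have hvs : v ∈ sphere (0 : W) 1 := by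
        simp only [mem_sphere, dist_zero_right, hv, norm_smul, norm_inv, Real.norm_eq_abs,
          abs_of_pos hnu]
        have h1 : ‖u1‖ = ‖u‖ := rfl
        rw [h1]
        field_simp
      obtain ⟨y, hy, hvy⟩ := Set.mem_iUnion₂.mp (htcov hvs)
      have hyt : y ∈ htf.toFinset := htf.mem_toFinset.mpr hy
      refine ⟨g y hy, ?_, ?_⟩
      · rw [hF]
        refine Finset.mem_insert_of_mem (Finset.mem_image.mpr ⟨⟨y, hyt⟩, Finset.mem_attach _ _, ?_⟩)
        congr 1
      · have hdist : ‖(v : X) - (y : X)‖ < η := by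
          have h := hvy
          simp only [Set.mem_setOf_eq] at h
          rw [dist_eq_norm] at h
          exact h
        have hfy : g y hy (y : X) = ‖(y:X)‖ := hg2 _ _
        have hyn : ‖(y:X)‖ = 1 := by
          have := hts hy
          simpa using this
        have hfv : (1 - η) ≤ g y hy (v : X) := by
          have hsplit : (v:X) = (y:X) + ((v:X) - (y:X)) := by abel
          have h1 : g y hy (v:X) = g y hy (y:X) + g y hy ((v:X) - (y:X)) := by
            conv_lhs => rw [hsplit]
            rw [map_add]
          have h2 : |g y hy ((v:X) - (y:X))| ≤ η := by
            calc |g y hy ((v:X)-(y:X))| ≤ ‖g y hy‖ * ‖(v:X)-(y:X)‖ := (g y hy).le_opNorm _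
            _ ≤ 1 * η := mul_le_mul (le_of_eq (hg1 _ _)) hdist.le (norm_nonneg _) zero_le_one
            _ = η := one_mul η
          rw [h1, hfy, hyn]
          linarith [(abs_le.mp h2).1]
        have hvu : (v : X) = ‖u‖⁻¹ • u := rfl
        have hval : g y hy u = ‖u‖ * g y hy (v : X) := by
          rw [hvu, map_smul, smul_eq_mul]
          field_simp
        rw [hval]
        calc (1 - η) * ‖u‖ = ‖u‖ * (1 - η) := by ring
        _ ≤ ‖u‖ * g y hy (v:X) := mul_le_mul_of_nonneg_left hfv hnu.le

set_option maxHeartbeats 1600000 in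
/-- if `(b j)` is `lam`-wide-(s) and `‖p j‖ ≤ 1/(4lam)` for all `j`,
then `(b j + p j)` has a `(2lam² + 5)`-wide-(s) subsequence. -/
theorem stmt_16 [CompleteSpace X] (lam : ℝ) (hlam : 1 ≤ lam) (b p : ℕ → X)
    (hb : IsWideSWith lam b) (hp : ∀ j, ‖p j‖ ≤ 1 / (4 * lam)) :
    ∃ s : ℕ → ℕ, StrictMono s ∧
      IsWideSWith (2 * lam ^ 2 + 5) (fun j => b (s j) + p (s j)) := by
  classical
  obtain ⟨hbBasic, hbNorm, hbSigma⟩ := hb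
  clear hbBasic
  have hlam0 : (0:ℝ) < lam := by linarith
  set x : ℕ → X := fun i => b i + p i with hx
  set ν : ℝ := 1/(4*lam) with hνdef
  have hν0 : (0:ℝ) < ν := by rw [hνdef]; positivity
  have hν4 : ν * (4*lam) = 1 := by rw [hνdef]; field_simp
  have hνle : ν ≤ 1/4 := by
    rw [hνdef, div_le_div_iff₀ (by linarith) (by norm_num)]
    nlinarith
  have hxnorm : ∀ i, ‖x i‖ ≤ lam + ν := by
    intro i
    calc ‖x i‖ ≤ ‖b i‖ + ‖p i‖ := norm_add_le _ _
    _ ≤ lam + ν := add_le_add (hbNorm i) (hp i)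
  set ε : ℝ := 1/(100*lam^2) with hεdef
  have hε0 : (0:ℝ) < ε := by rw [hεdef]; positivity
  have hεeq : ε * (100*lam^2) = 1 := by rw [hεdef]; field_simp
  have hεle : ε ≤ 1/100 := by
    rw [hεdef, div_le_div_iff₀ (by positivity) (by norm_num)]
    nlinarith
  set δ : ℕ → ℝ := fun j => ε/2^j with hδdef
  have hδ0 : ∀ j, 0 < δ j := by intro j; rw [hδdef]; positivity
  have hδk : ∀ k : ℕ, (k:ℝ) * δ k ≤ ε := by
    intro k
    have h2 : (k:ℝ) ≤ 2^k := by exact_mod_cast (Nat.lt_two_pow_self (n := k)).le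
    have h2' : (0:ℝ) < 2^k := by positivity
    rw [hδdef]
    have : (k:ℝ) * (ε/2^k) = ε * ((k:ℝ)/2^k) := by ring
    rw [this]
    calc ε * ((k:ℝ)/2^k) ≤ ε * 1 := by
          apply mul_le_mul_of_nonneg_left _ hε0.le
          rw [div_le_one h2']
          exact h2
    _ = ε := mul_one ε
  have hδsum : ∀ (k n : ℕ), ∑ j ∈ Finset.Ico k n, δ j ≤ 2*ε := by
    intro k n
    have h1 : ∑ j ∈ Finset.Ico k n, δ j ≤ ∑ j ∈ Finset.range n, δ j := by
      rw [Finset.range_eq_Ico]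
      exact Finset.sum_le_sum_of_subset_of_nonneg
        (Finset.Ico_subset_Ico (Nat.zero_le k) le_rfl) (fun i _ _ => (hδ0 i).le)
    have h2 : ∑ j ∈ Finset.range n, δ j = ε * ∑ j ∈ Finset.range n, (1/2:ℝ)^j := by
      rw [Finset.mul_sum]
      apply Finset.sum_congr rfl
      intro j _
      rw [hδdef]
      rw [div_pow, one_pow]
      ring
    calc ∑ j ∈ Finset.Ico k n, δ j ≤ ε * ∑ j ∈ Finset.range n, (1/2:ℝ)^j := by rw [← h2]; exact h1
    _ ≤ ε * 2 := mul_le_mul_of_nonneg_left (sum_geometric_two_le n) hε0.le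
    _ = 2*ε := by ring
  -- tail functionals
  obtain ⟨G, hGnorm, hGeval⟩ := exists_tail_functionals lam hlam b hbSigma
  -- ultrafilter
  set U : Ultrafilter ℕ := Filter.hyperfilter ℕ with hUdef
  have hU : (U : Filter ℕ) ≤ (Filter.cofinite : Filter ℕ) := Filter.hyperfilter_le_cofinite
  have hUtail : ∀ N : ℕ, ∀ᶠ i in (U : Filter ℕ), N ≤ i := by
    intro N
    apply hU
    have : {i : ℕ | ¬ N ≤ i}.Finite := by
      apply Set.Finite.subset (Set.finite_lt_nat N)
      intro i hi
      simpa using hi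
    exact this
  have ulim : ∀ (u : ℕ → ℝ) (R : ℝ), (∀ i, |u i| ≤ R) →
      ∃ cc : ℝ, |cc| ≤ R ∧ Tendsto u (U : Filter ℕ) (𝓝 cc) := by
    intro u R hu
    have hmem : Set.Icc (-R) R ∈ (U.map u : Filter ℝ) := by
      rw [Ultrafilter.coe_map, Filter.mem_map]
      apply Filter.univ_mem'
      intro i
      exact Set.mem_Icc.mpr (abs_le.mp (hu i))
    obtain ⟨cc, hcc, hle⟩ := (isCompact_Icc (a := -R) (b := R)).ultrafilter_le_nhds (U.map u)
      (Filter.le_principal_iff.mpr hmem)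
    refine ⟨cc, abs_le.mpr ⟨(Set.mem_Icc.mp hcc).1, (Set.mem_Icc.mp hcc).2⟩, ?_⟩
    have h2 : Filter.map u (U : Filter ℕ) ≤ 𝓝 cc := by
      simpa [Ultrafilter.coe_map] using hle
    exact h2
  -- H : ultralimit of the G's
  have hHex : ∀ v : X, ∃ cc : ℝ, |cc| ≤ lam * ‖v‖ ∧
      Tendsto (fun tt => G tt v) (U : Filter ℕ) (𝓝 cc) := by
    intro v
    apply ulim
    intro i
    calc |G i v| ≤ ‖G i‖ * ‖v‖ := (G i).le_opNorm v
    _ ≤ lam * ‖v‖ := mul_le_mul_of_nonneg_right (hGnorm i) (norm_nonneg v)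
  choose Hf hHb hHt using hHex
  have hHadd : ∀ u v : X, Hf (u + v) = Hf u + Hf v := by
    intro u v
    refine tendsto_nhds_unique (hHt (u+v)) ?_
    have : (fun tt => G tt (u+v)) = fun tt => G tt u + G tt v := by
      funext tt; rw [map_add]
    rw [this]
    exact (hHt u).add (hHt v)
  have hHsmul : ∀ (r : ℝ) (v : X), Hf (r • v) = r * Hf v := by
    intro r v
    refine tendsto_nhds_unique (hHt (r • v)) ?_
    have : (fun tt => G tt (r • v)) = fun tt => r * G tt v := by
      funext tt; rw [map_smul, smul_eq_mul]
    rw [this]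
    exact (hHt v).const_mul r
  set H : X →L[ℝ] ℝ := LinearMap.mkContinuous
    { toFun := Hf, map_add' := hHadd,
      map_smul' := by intro r v; simp only [RingHom.id_apply, smul_eq_mul]; exact hHsmul r v }
    lam (fun v => by rw [Real.norm_eq_abs]; exact hHb v) with hHdef
  have hHapp : ∀ v, H v = Hf v := fun v => rfl
  have hHbd : ∀ v, |H v| ≤ lam * ‖v‖ := by intro v; rw [hHapp]; exact hHb v
  have hHtt : ∀ v, Tendsto (fun tt => G tt v) (U : Filter ℕ) (𝓝 (H v)) := by
    intro v; rw [hHapp]; exact hHt v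
  have hHbi : ∀ i, H (b i) = 0 := by
    intro i
    refine tendsto_nhds_unique (hHtt (b i)) ?_
    have hev : ∀ᶠ tt in (U : Filter ℕ), G tt (b i) = 0 := by
      filter_upwards [hUtail (i+1)] with tt htt
      rw [hGeval]
      simp only [ite_eq_right_iff]
      intro h
      omega
    exact Tendsto.congr' (by filter_upwards [hev] with tt h; exact h.symm) tendsto_const_nhds
  -- ultralimits along the sequence x
  have hLex : ∀ f : X →L[ℝ] ℝ, ∃ cc : ℝ, |cc| ≤ ‖f‖ * (lam + ν) ∧
      Tendsto (fun i => f (x i)) (U : Filter ℕ) (𝓝 cc) := by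
    intro f
    apply ulim
    intro i
    calc |f (x i)| ≤ ‖f‖ * ‖x i‖ := f.le_opNorm _
    _ ≤ ‖f‖ * (lam + ν) := mul_le_mul_of_nonneg_left (hxnorm i) (norm_nonneg f)
  choose L hLb hLt using hLex
  -- norming nets
  have hnet : ∀ N : ℕ, ∃ F : Finset (X →L[ℝ] ℝ), (∀ f ∈ F, ‖f‖ ≤ 1) ∧
      ∀ u ∈ Submodule.span ℝ (x '' {i | i < N}), ∃ f ∈ F, (1-ε) * ‖u‖ ≤ f u := by
    intro N
    apply exists_norming_net
    · exact Set.Finite.image x (Set.finite_lt_nat N)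
    · exact hε0
  choose F0 hF0norm hF0 using hnet
  set FS : ℕ → Finset (X →L[ℝ] ℝ) := fun N => (Finset.range (N+1)).biUnion F0 with hFSdef
  have hFSnorm : ∀ N f, f ∈ FS N → ‖f‖ ≤ 1 := by
    intro N f hf
    rw [hFSdef] at hf
    obtain ⟨r, _, hr⟩ := Finset.mem_biUnion.mp hf
    exact hF0norm r f hr
  have hFSmono : ∀ {N N' : ℕ}, N ≤ N' → FS N ⊆ FS N' := by
    intro N N' hNN'
    rw [hFSdef]
    exact Finset.biUnion_subset_biUnion_of_subset_left _
      (Finset.range_subset_range.mpr (by omega))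
  have hFSmem : ∀ N, ∀ u ∈ Submodule.span ℝ (x '' {i | i < N}), ∃ f ∈ FS N, (1-ε) * ‖u‖ ≤ f u := by
    intro N u hu
    obtain ⟨f, hf1, hf2⟩ := hF0 N u hu
    exact ⟨f, Finset.mem_biUnion.mpr ⟨N, Finset.self_mem_range_succ N, hf1⟩, hf2⟩
  -- eventual closeness helper
  have hballs : ∀ (cc dd : ℝ), 0 < dd → ∀ᶠ y in 𝓝 cc, |y - cc| ≤ dd := by
    intro cc dd hdd
    filter_upwards [Metric.ball_mem_nhds cc hdd] with y hy
    rw [Metric.mem_ball, Real.dist_eq] at hy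
    exact hy.le
  -- the inductive step
  have hstep : ∀ a k : ℕ, ∃ ts : ℕ × ℕ, a < ts.1 ∧ ts.1 ≤ ts.2 ∧
      (∀ i ≤ a, |G ts.1 (p i) - H (p i)| ≤ δ k) ∧
      (∀ t' ≤ ts.1, |(G t' - H) (x ts.2) - L (G t' - H)| ≤ δ k) ∧
      (∀ f ∈ FS (a+1), |f (x ts.2) - L f| ≤ δ k) := by
    intro a k
    have h1 : ∀ᶠ tt in (U : Filter ℕ), ∀ i ∈ Finset.range (a+1), |G tt (p i) - H (p i)| ≤ δ k := by
      rw [Filter.eventually_all_finset]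
      intro i _
      exact (hHtt (p i)).eventually (hballs _ _ (hδ0 k))
    have h2 : ∀ᶠ tt in (U : Filter ℕ), a < tt := by
      filter_upwards [hUtail (a+1)] with tt htt; omega
    obtain ⟨tt, htt1, htt2⟩ := (h1.and h2).exists
    have h3 : ∀ᶠ ss in (U : Filter ℕ), ∀ t' ∈ Finset.range (tt+1),
        |(G t' - H) (x ss) - L (G t' - H)| ≤ δ k := by
      rw [Filter.eventually_all_finset]
      intro t' _
      exact (hLt (G t' - H)).eventually (hballs _ _ (hδ0 k))
    have h4 : ∀ᶠ ss in (U : Filter ℕ), ∀ f ∈ FS (a+1), |f (x ss) - L f| ≤ δ k := by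
      rw [Filter.eventually_all_finset]
      intro f _
      exact (hLt f).eventually (hballs _ _ (hδ0 k))
    have h5 : ∀ᶠ ss in (U : Filter ℕ), tt ≤ ss := hUtail tt
    obtain ⟨ss, hss3, hss4, hss5⟩ := (h3.and (h4.and h5)).exists
    refine ⟨(tt, ss), htt2, hss5, ?_, ?_, hss4⟩
    · intro i hi
      exact htt1 i (Finset.mem_range.mpr (by omega))
    · intro t' ht'
      exact hss3 t' (Finset.mem_range.mpr (by omega))
  choose step hstep1 hstep2 hstep3 hstep4 hstep5 using hstep
  -- the recursively defined sequences
  set q : ℕ → ℕ × ℕ := fun k => Nat.rec (step 0 0) (fun k ih => step ih.2 (k+1)) k with hq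
  set t : ℕ → ℕ := fun k => (q k).1 with ht
  set s : ℕ → ℕ := fun k => (q k).2 with hs
  have hq0 : q 0 = step 0 0 := rfl
  have hqsucc : ∀ k, q (k+1) = step (s k) (k+1) := fun k => rfl
  have htq : ∀ k, t k = (q k).1 := fun k => rfl
  have hsq : ∀ k, s k = (q k).2 := fun k => rfl
  have hts : ∀ k, t k ≤ s k := by
    intro k
    rw [htq k, hsq k]
    cases k with
    | zero => rw [hq0]; exact hstep2 0 0
    | succ k' => rw [hqsucc k']; exact hstep2 (s k') (k'+1)
  have hst : ∀ k, s k < t (k+1) := by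
    intro k
    rw [htq (k+1), hqsucc k]
    exact hstep1 (s k) (k+1)
  have smono : StrictMono s := by
    apply strictMono_nat_of_lt_succ
    intro k
    exact lt_of_lt_of_le (hst k) (hts (k+1))
  have tmono : ∀ {k j : ℕ}, k ≤ j → t k ≤ t j := by
    intro k j hkj
    induction j with
    | zero => simp_all
    | succ j' ih =>
      rcases Nat.lt_or_ge k (j'+1) with h | h
      · have h1 : t k ≤ t j' := ih (by omega)
        have h2 : t j' ≤ s j' := hts j'
        have h3 : s j' < t (j'+1) := hst j'
        omega
      · have : k = j' + 1 := by omega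
        rw [this]
  have hI2 : ∀ k j, j < k → |G (t k) (p (s j)) - H (p (s j))| ≤ δ k := by
    intro k j hjk
    cases k with
    | zero => omega
    | succ k' =>
      rw [htq (k'+1), hqsucc k']
      exact hstep3 (s k') (k'+1) (s j) (smono.monotone (by omega))
  have hI3 : ∀ k t', t' ≤ t k → |(G t' - H) (x (s k)) - L (G t' - H)| ≤ δ k := by
    intro k t' ht'
    rw [hsq k]
    cases k with
    | zero =>
      rw [hq0]
      refine hstep4 0 0 t' ?_
      rw [htq 0, hq0] at ht'
      exact ht'
    | succ k' =>
      rw [hqsucc k']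
      refine hstep4 (s k') (k'+1) t' ?_
      rw [htq (k'+1), hqsucc k'] at ht'
      exact ht'
  have hI4 : ∀ j, 1 ≤ j → ∀ f ∈ FS (s (j-1) + 1), |f (x (s j)) - L f| ≤ δ j := by
    intro j hj f hf
    cases j with
    | zero => omega
    | succ j' =>
      rw [hsq (j'+1), hqsucc j']
      refine hstep5 (s j') (j'+1) f ?_
      simpa using hf
  -- notation for partial sums
  -- key estimate on the tail sums
  have hσkey : ∀ (c : ℕ → ℝ) (n : ℕ), ∀ k ≤ n,
      |∑ j ∈ Finset.Ico k n, c j| ≤ 5*lam*‖∑ j ∈ Finset.range n, c j • x (s j)‖ ∧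
      lam * |∑ j ∈ Finset.Ico k n, c j| ≤
        (4*lam^2+1) * ‖∑ j ∈ Finset.range n, c j • x (s j)‖ := by
    intro c n
    set T : X := ∑ j ∈ Finset.range n, c j • x (s j) with hT
    set M : ℝ := ‖T‖ with hM
    have hM0 : 0 ≤ M := norm_nonneg _
    set σ : ℕ → ℝ := fun k => ∑ j ∈ Finset.Ico k n, c j with hσ
    have hne : (Finset.range (n+1)).Nonempty := Finset.nonempty_range_add_one
    set Mσ : ℝ := (Finset.range (n+1)).sup' hne (fun k => |σ k|) with hMσ
    have hMσle : ∀ k ≤ n, |σ k| ≤ Mσ := by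
      intro k hk
      rw [hMσ]
      exact Finset.le_sup' (fun k => |σ k|) (Finset.mem_range.mpr (Nat.lt_succ_of_le hk))
    have hMσ0 : 0 ≤ Mσ := le_trans (abs_nonneg _) (hMσle n le_rfl)
    have hcb : ∀ j, j < n → |c j| ≤ 2 * Mσ := by
      intro j hj
      have h1 : σ j = c j + σ (j+1) := by
        rw [hσ]
        exact Finset.sum_eq_sum_Ico_succ_bot hj c
      have h2 : c j = σ j - σ (j+1) := by rw [h1]; ring
      rw [h2]
      calc |σ j - σ (j+1)| ≤ |σ j| + |σ (j+1)| := abs_sub _ _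
      _ ≤ Mσ + Mσ := add_le_add (hMσle j (by omega)) (hMσle (j+1) (by omega))
      _ = 2 * Mσ := by ring
    -- main estimate for arbitrary k ≤ n
    have hmain : ∀ k ≤ n, |σ k| ≤ 4*lam*M + 12*ε*Mσ := by
      intro k hk
      set φ : X →L[ℝ] ℝ := G (t k) - H with hφ
      -- the ultralimit of φ along x is at least 1/2
      have hLφ : 1/2 ≤ L φ := by
        have hev : ∀ᶠ i in (U : Filter ℕ), 1/2 ≤ φ (x i) := by
          filter_upwards [hUtail (t k)] with i hi
          have h1 : φ (x i) = G (t k) (b i) + G (t k) (p i) - H (b i) - H (p i) := by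
            rw [hφ]
            simp only [ContinuousLinearMap.sub_apply]
            rw [hx]
            simp only [map_add]
            ring
          rw [h1, hGeval, if_pos hi, hHbi]
          have h2 : |G (t k) (p i)| ≤ 1/4 := by
            calc |G (t k) (p i)| ≤ ‖G (t k)‖ * ‖p i‖ := (G (t k)).le_opNorm _
            _ ≤ lam * ν := by
                apply mul_le_mul (hGnorm _) (hp i) (norm_nonneg _) hlam0.le
            _ ≤ 1/4 := by nlinarith
          have h3 : |H (p i)| ≤ 1/4 := by
            calc |H (p i)| ≤ lam * ‖p i‖ := hHbd _
            _ ≤ lam * ν := mul_le_mul_of_nonneg_left (hp i) hlam0.le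
            _ ≤ 1/4 := by nlinarith
          have h4 := (abs_le.mp h2).1
          have h5 := (abs_le.mp h3).2
          linarith
        exact ge_of_tendsto (hLt φ) hev
      -- split the sum
      have hsplit : φ T = (∑ j ∈ Finset.range k, c j * φ (x (s j)))
          + (∑ j ∈ Finset.Ico k n, c j * φ (x (s j))) := by
        have e1 : ∑ j ∈ Finset.range n, c j • x (s j)
            = (∑ j ∈ Finset.range k, c j • x (s j)) + ∑ j ∈ Finset.Ico k n, c j • x (s j) := by
          rw [Finset.range_eq_Ico, Finset.range_eq_Ico, Finset.sum_Ico_consecutive _ (Nat.zero_le k) hk]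
        rw [hT, e1, map_add, map_sum, map_sum]
        simp only [map_smul, smul_eq_mul]
      set A : ℝ := ∑ j ∈ Finset.range k, c j * φ (x (s j)) with hA
      set E : ℝ := ∑ j ∈ Finset.Ico k n, c j * (φ (x (s j)) - L φ) with hE
      have hiden : L φ * σ k = φ T - A - E := by
        have e2 : ∑ j ∈ Finset.Ico k n, c j * φ (x (s j)) = L φ * σ k + E := by
          simp only [hσ, hE]
          rw [Finset.mul_sum, ← Finset.sum_add_distrib]
          apply Finset.sum_congr rfl
          intro j _; ring
        rw [hsplit, e2]
        ring
      -- bound A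
      have hAbd : |A| ≤ 2 * Mσ * ε := by
        rw [hA]
        calc |∑ j ∈ Finset.range k, c j * φ (x (s j))|
            ≤ ∑ j ∈ Finset.range k, |c j * φ (x (s j))| := Finset.abs_sum_le_sum_abs _ _
        _ ≤ ∑ j ∈ Finset.range k, 2 * Mσ * δ k := by
            apply Finset.sum_le_sum
            intro j hj
            have hjk : j < k := Finset.mem_range.mp hj
            have h1 : φ (x (s j)) = G (t k) (p (s j)) - H (p (s j)) := by
              rw [hφ]
              simp only [ContinuousLinearMap.sub_apply]
              rw [hx]
              simp only [map_add]
              have hb1 : G (t k) (b (s j)) = 0 := by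
                rw [hGeval]
                apply if_neg
                have h2 : s j ≤ s (k-1) := smono.monotone (by omega)
                have h3 : s (k-1) < t k := by
                  have := hst (k-1)
                  have hkk : k - 1 + 1 = k := by omega
                  rwa [hkk] at this
                omega
              rw [hb1, hHbi]
              ring
            rw [abs_mul, h1]
            have h2 : |G (t k) (p (s j)) - H (p (s j))| ≤ δ k := hI2 k j hjk
            have h3 : |c j| ≤ 2*Mσ := hcb j (by omega)
            apply mul_le_mul h3 h2 (abs_nonneg _) (by positivity)
        _ = (k : ℝ) * (2 * Mσ * δ k) := by
            rw [Finset.sum_const, Finset.card_range, nsmul_eq_mul]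
        _ ≤ 2 * Mσ * ε := by
            have := hδk k
            nlinarith [hδ0 k, hMσ0, Nat.cast_nonneg (α := ℝ) k]
      -- bound E
      have hEbd : |E| ≤ 2 * Mσ * (2*ε) := by
        rw [hE]
        calc |∑ j ∈ Finset.Ico k n, c j * (φ (x (s j)) - L φ)|
            ≤ ∑ j ∈ Finset.Ico k n, |c j * (φ (x (s j)) - L φ)| := Finset.abs_sum_le_sum_abs _ _
        _ ≤ ∑ j ∈ Finset.Ico k n, 2 * Mσ * δ j := by
            apply Finset.sum_le_sum
            intro j hj
            obtain ⟨hj1, hj2⟩ := Finset.mem_Ico.mp hj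
            rw [abs_mul]
            have h2 : |φ (x (s j)) - L φ| ≤ δ j := by
              rw [hφ]
              exact hI3 j (t k) (tmono hj1)
            have h3 : |c j| ≤ 2*Mσ := hcb j hj2
            apply mul_le_mul h3 h2 (abs_nonneg _) (by positivity)
        _ = 2 * Mσ * ∑ j ∈ Finset.Ico k n, δ j := by rw [Finset.mul_sum]
        _ ≤ 2 * Mσ * (2*ε) := by
            apply mul_le_mul_of_nonneg_left (hδsum k n) (by positivity)
      -- bound φ T
      have hφT : |φ T| ≤ 2 * lam * M := by
        rw [hφ]
        simp only [ContinuousLinearMap.sub_apply]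
        calc |G (t k) T - H T| ≤ |G (t k) T| + |H T| := abs_sub _ _
        _ ≤ lam * ‖T‖ + lam * ‖T‖ := by
            apply add_le_add
            · calc |G (t k) T| ≤ ‖G (t k)‖ * ‖T‖ := (G (t k)).le_opNorm _
              _ ≤ lam * ‖T‖ := mul_le_mul_of_nonneg_right (hGnorm _) (norm_nonneg _)
            · exact hHbd T
        _ = 2 * lam * M := by rw [hM]; ring
      -- conclude
      have h6 : |L φ * σ k| ≤ 2*lam*M + 2*Mσ*ε + 2*Mσ*(2*ε) := by
        rw [hiden]
        calc |φ T - A - E| ≤ |φ T - A| + |E| := abs_sub _ _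
        _ ≤ |φ T| + |A| + |E| := by
            have := abs_sub (φ T) A
            linarith
        _ ≤ 2*lam*M + 2*Mσ*ε + 2*Mσ*(2*ε) := by
            apply add_le_add (add_le_add hφT hAbd) hEbd
      have h7 : 1/2 * |σ k| ≤ |L φ * σ k| := by
        rw [abs_mul]
        apply mul_le_mul_of_nonneg_right _ (abs_nonneg _)
        calc (1:ℝ)/2 ≤ L φ := hLφ
        _ ≤ |L φ| := le_abs_self _
      linarith
    -- fixed point
    have hfix : Mσ ≤ 4*lam*M + 12*ε*Mσ := by
      rw [hMσ]
      apply Finset.sup'_le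
      intro k hk
      have hk' := Finset.mem_range.mp hk
      exact hmain k (by omega)
    -- clean cleared-denominator form
    have h300 : 300*ε*lam^2 = 3 := by
      have : 300*ε*lam^2 = 3*(ε*(100*lam^2)) := by ring
      rw [this, hεeq]; norm_num
    have hB : Mσ * (25*lam^2 - 3) ≤ 100*lam^3*M := by
      have h1 := mul_le_mul_of_nonneg_left hfix (show (0:ℝ) ≤ 25*lam^2 by positivity)
      have h2 : 25*lam^2 * (4*lam*M + 12*ε*Mσ) = 100*lam^3*M + 300*ε*lam^2*Mσ := by ring
      rw [h2, h300] at h1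
      linarith
    have hP : (0:ℝ) < 25*lam^2 - 3 := by nlinarith
    have hMσ5 : Mσ ≤ 5*lam*M := by
      have haux : (0:ℝ) ≤ 25*lam^3 - 15*lam := by nlinarith
      have h1 : 100*lam^3*M ≤ (5*lam*M) * (25*lam^2 - 3) := by
        have : (5*lam*M) * (25*lam^2 - 3) - 100*lam^3*M = M * (25*lam^3 - 15*lam) := by ring
        nlinarith [mul_nonneg hM0 haux]
      have h2 : Mσ * (25*lam^2 - 3) ≤ (5*lam*M) * (25*lam^2 - 3) := le_trans hB h1
      exact le_of_mul_le_mul_right h2 hP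
    have hSharp : lam * Mσ ≤ (4*lam^2+1) * M := by
      have h1 := mul_le_mul_of_nonneg_left hB hlam0.le
      -- lam * Mσ * (25 lam^2 - 3) ≤ 100 lam^4 M ≤ (4 lam^2+1)(25 lam^2-3) M
      have h2 : lam * (100*lam^3*M) ≤ ((4*lam^2+1) * M) * (25*lam^2 - 3) := by
        have e : ((4*lam^2+1) * M) * (25*lam^2 - 3) - lam * (100*lam^3*M)
            = M * (13*lam^2 - 3) := by ring
        nlinarith [mul_nonneg hM0 (show (0:ℝ) ≤ 13*lam^2 - 3 by nlinarith)]
      have h3 : (lam * Mσ) * (25*lam^2 - 3) ≤ ((4*lam^2+1) * M) * (25*lam^2 - 3) := by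
        calc (lam * Mσ) * (25*lam^2 - 3) = lam * (Mσ * (25*lam^2 - 3)) := by ring
        _ ≤ lam * (100*lam^3*M) := h1
        _ ≤ ((4*lam^2+1) * M) * (25*lam^2 - 3) := h2
      exact le_of_mul_le_mul_right h3 hP
    intro k hk
    constructor
    · calc |σ k| ≤ Mσ := hMσle k hk
      _ ≤ 5*lam*M := hMσ5
    · calc lam * |σ k| ≤ lam * Mσ := mul_le_mul_of_nonneg_left (hMσle k hk) hlam0.le
      _ ≤ (4*lam^2+1) * M := hSharp
  -- now assemble the wide-(s) conditions for the subsequence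
  refine ⟨s, smono, ?_, ?_, ?_⟩
  · -- basic
    intro c k n hkn
    simp only []
    have hrw : (∑ j ∈ Finset.range k, c j • (b (s j) + p (s j)))
        = ∑ j ∈ Finset.range k, c j • x (s j) := rfl
    have hrw2 : (∑ j ∈ Finset.range n, c j • (b (s j) + p (s j)))
        = ∑ j ∈ Finset.range n, c j • x (s j) := rfl
    rw [hrw, hrw2]
    set T : X := ∑ j ∈ Finset.range n, c j • x (s j) with hT
    set Tm : X := ∑ j ∈ Finset.range k, c j • x (s j) with hTm
    set M : ℝ := ‖T‖ with hM
    have hM0 : 0 ≤ M := norm_nonneg _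
    rcases Nat.eq_zero_or_pos k with hk0 | hkpos
    · rw [hTm, hk0]
      simp only [Finset.range_zero, Finset.sum_empty, norm_zero]
      positivity
    -- k ≥ 1
    have hσb : ∀ k' ≤ n, |∑ j ∈ Finset.Ico k' n, c j| ≤ 5*lam*M := by
      intro k' hk'
      exact ((hσkey c n k' hk').1)
    have hσsharp : ∀ k' ≤ n, lam * |∑ j ∈ Finset.Ico k' n, c j| ≤ (4*lam^2+1)*M := by
      intro k' hk'
      exact ((hσkey c n k' hk').2)
    -- Tm is in the span of early x's
    have hmem : Tm ∈ Submodule.span ℝ (x '' {i | i < s (k-1) + 1}) := by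
      rw [hTm]
      apply Submodule.sum_mem
      intro j hj
      apply Submodule.smul_mem
      apply Submodule.subset_span
      refine ⟨s j, ?_, rfl⟩
      have hj' := Finset.mem_range.mp hj
      have : s j ≤ s (k-1) := smono.monotone (by omega)
      simpa using Nat.lt_succ_of_le this
    obtain ⟨f, hfFS, hfnorm⟩ := hFSmem (s (k-1) + 1) Tm hmem
    have hfn1 : ‖f‖ ≤ 1 := hFSnorm _ f hfFS
    -- identity
    have hsplit : f T = f Tm + (∑ j ∈ Finset.Ico k n, c j * f (x (s j))) := by
      have e1 : ∑ j ∈ Finset.range n, c j • x (s j)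
          = (∑ j ∈ Finset.range k, c j • x (s j)) + ∑ j ∈ Finset.Ico k n, c j • x (s j) := by
        rw [Finset.range_eq_Ico, Finset.range_eq_Ico, Finset.sum_Ico_consecutive _ (Nat.zero_le k) hkn]
      rw [hT, hTm, e1, map_add, map_sum, map_sum]
      simp only [map_smul, smul_eq_mul]
    set σm : ℝ := ∑ j ∈ Finset.Ico k n, c j with hσm
    set E : ℝ := ∑ j ∈ Finset.Ico k n, c j * (f (x (s j)) - L f) with hE
    have hiden : f Tm = f T - L f * σm - E := by
      have e2 : ∑ j ∈ Finset.Ico k n, c j * f (x (s j)) = L f * σm + E := by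
        simp only [hσm, hE]
        rw [Finset.mul_sum, ← Finset.sum_add_distrib]
        apply Finset.sum_congr rfl
        intro j _; ring
      rw [hsplit, e2]
      ring
    -- bounds
    have hcb : ∀ j, j < n → |c j| ≤ 10 * lam * M := by
      intro j hj
      have h1 : ∑ j' ∈ Finset.Ico j n, c j' = c j + ∑ j' ∈ Finset.Ico (j+1) n, c j' :=
        Finset.sum_eq_sum_Ico_succ_bot hj c
      have h2 : c j = (∑ j' ∈ Finset.Ico j n, c j') - ∑ j' ∈ Finset.Ico (j+1) n, c j' := by
        rw [h1]; ring
      rw [h2]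
      calc |(∑ j' ∈ Finset.Ico j n, c j') - ∑ j' ∈ Finset.Ico (j+1) n, c j'|
          ≤ |∑ j' ∈ Finset.Ico j n, c j'| + |∑ j' ∈ Finset.Ico (j+1) n, c j'| := abs_sub _ _
      _ ≤ 5*lam*M + 5*lam*M :=
          add_le_add (hσb j (by omega)) (hσb (j+1) (by omega))
      _ = 10 * lam * M := by ring
    have hEbd : |E| ≤ 10 * lam * M * (2*ε) := by
      rw [hE]
      calc |∑ j ∈ Finset.Ico k n, c j * (f (x (s j)) - L f)|
          ≤ ∑ j ∈ Finset.Ico k n, |c j * (f (x (s j)) - L f)| := Finset.abs_sum_le_sum_abs _ _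
      _ ≤ ∑ j ∈ Finset.Ico k n, 10 * lam * M * δ j := by
          apply Finset.sum_le_sum
          intro j hj
          obtain ⟨hj1, hj2⟩ := Finset.mem_Ico.mp hj
          rw [abs_mul]
          have h2 : |f (x (s j)) - L f| ≤ δ j := by
            apply hI4 j (by omega) f
            apply hFSmono _ hfFS
            have : s (k-1) ≤ s (j-1) := smono.monotone (by omega)
            omega
          have h3 : |c j| ≤ 10 * lam * M := hcb j hj2
          apply mul_le_mul h3 h2 (abs_nonneg _) (by positivity)
      _ = 10 * lam * M * ∑ j ∈ Finset.Ico k n, δ j := by rw [Finset.mul_sum]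
      _ ≤ 10 * lam * M * (2*ε) := by
          apply mul_le_mul_of_nonneg_left (hδsum k n) (by positivity)
    have hLfb : |L f| ≤ lam + ν := by
      calc |L f| ≤ ‖f‖ * (lam + ν) := hLb f
      _ ≤ 1 * (lam + ν) := by
          apply mul_le_mul_of_nonneg_right hfn1 (by positivity)
      _ = lam + ν := one_mul _
    have hfT : |f T| ≤ M := by
      calc |f T| ≤ ‖f‖ * ‖T‖ := f.le_opNorm _
      _ ≤ 1 * M := by
          rw [hM]
          apply mul_le_mul_of_nonneg_right hfn1 (norm_nonneg _)
      _ = M := one_mul M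
    -- piecewise numeric bounds
    have hLσ : |L f * σm| ≤ (4*lam^2+1)*M + (5/4)*M := by
      rw [abs_mul]
      have h1 : |L f| * |σm| ≤ (lam + ν) * |σm| :=
        mul_le_mul_of_nonneg_right hLfb (abs_nonneg _)
      have h2 : lam * |σm| ≤ (4*lam^2+1)*M := hσsharp k hkn
      have h3 : ν * |σm| ≤ (5/4)*M := by
        have h4 : |σm| ≤ 5*lam*M := hσb k hkn
        have h5 : ν * |σm| ≤ ν * (5*lam*M) := mul_le_mul_of_nonneg_left h4 hν0.le
        have h6 : ν * (5*lam*M) = (5/4)*M := by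
          have : ν * (5*lam*M) = (5/4)*M*(ν*(4*lam)) := by ring
          rw [this, hν4, mul_one]
        linarith
      nlinarith [abs_nonneg σm]
    have hEbd2 : |E| ≤ (1/5)*M := by
      have h1 : 10*lam*M*(2*ε) ≤ (1/5)*M := by
        have h2 : 10*lam*M*(2*ε) = (1/5)*M*(ε*(100*lam^2))/lam := by
          field_simp
          ring
        rw [h2, hεeq]
        rw [div_le_iff₀ hlam0]
        nlinarith [hM0]
      linarith [hEbd]
    -- main chain
    have hchain : (1-ε) * ‖Tm‖ ≤ (4*lam^2 + 69/20) * M := by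
      calc (1-ε) * ‖Tm‖ ≤ f Tm := hfnorm
      _ = f T - L f * σm - E := hiden
      _ ≤ |f T| + |L f * σm| + |E| := by
          have h1 : f T - L f * σm - E ≤ |f T - L f * σm - E| := le_abs_self _
          have h2 : |f T - L f * σm - E| ≤ |f T - L f * σm| + |E| := abs_sub _ _
          have h3 : |f T - L f * σm| ≤ |f T| + |L f * σm| := abs_sub _ _
          linarith
      _ ≤ M + ((4*lam^2+1)*M + (5/4)*M) + (1/5)*M := by
          apply add_le_add (add_le_add hfT hLσ) hEbd2
      _ = (4*lam^2 + 69/20) * M := by ring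
    -- final numeric inequality
    have h1ε : (0:ℝ) < 1 - ε := by linarith only [hεle]
    have hεbd2 : ε*(4*lam^2+10) ≤ 7/50 := by
      have h1 : ε*(4*lam^2) = 1/25 := by
        have e : ε*(4*lam^2) = (1/25)*(ε*(100*lam^2)) := by ring
        rw [e, hεeq, mul_one]
      have h2 : ε*10 ≤ 1/10 := by linarith only [hεle]
      have h3 : ε*(4*lam^2+10) = ε*(4*lam^2) + ε*10 := by ring
      rw [h3, h1]
      linarith only [h2]
    have hpoly : (4*lam^2 + 69/20) ≤ (1-ε)*(4*lam^2+10) := by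
      have e : (1-ε)*(4*lam^2+10) = (4*lam^2+10) - ε*(4*lam^2+10) := by ring
      rw [e]
      linarith only [hεbd2]
    have hfinal : (1-ε) * ‖Tm‖ ≤ (1-ε) * ((4*lam^2+10) * M) := by
      calc (1-ε) * ‖Tm‖ ≤ (4*lam^2 + 69/20) * M := hchain
      _ ≤ ((1-ε)*(4*lam^2+10)) * M := mul_le_mul_of_nonneg_right hpoly hM0
      _ = (1-ε) * ((4*lam^2+10) * M) := by ring
    have := (mul_le_mul_iff_right₀ h1ε).mp hfinal
    calc ‖Tm‖ ≤ (4*lam^2+10) * M := this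
    _ = 2 * (2*lam^2 + 5) * M := by ring
  · -- norm bounds
    intro j
    simp only []
    calc ‖b (s j) + p (s j)‖ = ‖x (s j)‖ := rfl
    _ ≤ lam + ν := hxnorm _
    _ ≤ 2*lam^2 + 5 := by nlinarith only [hνle, hlam, sq_nonneg (lam - 1)]
  · -- the (s)-condition
    intro c k n hkn
    simp only []
    have hrw2 : (∑ j ∈ Finset.range n, c j • (b (s j) + p (s j)))
        = ∑ j ∈ Finset.range n, c j • x (s j) := rfl
    rw [hrw2]
    calc |∑ j ∈ Finset.Ico k n, c j| ≤ 5*lam * ‖∑ j ∈ Finset.range n, c j • x (s j)‖ :=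
        (hσkey c n k hkn).1
    _ ≤ (2*lam^2 + 5) * ‖∑ j ∈ Finset.range n, c j • x (s j)‖ := by
        apply mul_le_mul_of_nonneg_right _ (norm_nonneg _)
        nlinarith only [sq_nonneg (4*lam - 5)]
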